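/- (Hybrid large sieve.) There is an absolute constant C such that for every positive integer q, every real U ≥ 1, every positive integer N, and every sequence of complex numbers (a_n)_{1≤n≤N}, one has ∫_{−U}^{U} ∑_{ψ mod q} |∑_{n=1}^{N} a_n ψ(n) n^{iu}|² du ≤ C (qU + N) ∑_{n=1}^{N} |a_n|², where the sum over ψ runs over all Dirichlet characters modulo q. -/

import Mathlib

/-!
For a finite family of trigonometric polynomials `F_j(u) = ∑ₙ c_j(n) e^{i νₙ u}`, the indicator
of `[-U, U]` is dominated by `(2δ)⁻¹` times the convolution of the indicators of `[-δ, δ]` and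
`[-U-δ, U+δ]`, whose Fourier transform at `ξ` is the product `B_δ(ξ) B_{U+δ}(ξ)` of the
transforms of the two boxes. Hence `∫_{-U}^{U} ∑_j |F_j|²` is at most
`(2δ)⁻¹ ∑_{m,n} |∑_j c_j(m) conj c_j(n)| |B_δ(ν_m - ν_n) B_{U+δ}(ν_m - ν_n)|`.
With `c_ψ(n) = a_n ψ(n)` and `νₙ = log n`, orthogonality of characters kills the pairs
`m ≢ n (mod q)` and bounds the others by `q |a_m| |a_n|`. On the diagonal `|B_δ B_{U+δ}| ≤ 4δ(U+δ)`;
off it `|log m - log n| ≥ |m - n| / N` gives `|B_δ B_{U+δ}| ≤ 4N² / (m - n)²`, and the distinct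
`n ≡ m (mod q)` contribute at most `∑_{k ≠ 0} 1/(qk)² = π²/(3q²)`. A Schur test and the choice
`δ = (N + 1)/q` give the bound `10 (qU + N) ∑ |a_n|²`.
-/

open MeasureTheory Complex Finset Real

lemma abs_sub_div_le_abs_log_sub_log {x y N : ℝ} (hx : 0 < x) (hy : 0 < y) (hxN : x ≤ N)
    (hyN : y ≤ N) : |x - y| / N ≤ |Real.log x - Real.log y| := by
  wlog hyx : y ≤ x generalizing x y
  · simpa only [abs_sub_comm] using this hy hx hyN hxN (le_of_not_ge hyx)
  have key : (x - y) / x ≤ Real.log x - Real.log y := by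
    have := Real.one_sub_inv_le_log_of_pos (div_pos hx hy)
    rw [Real.log_div hx.ne' hy.ne', inv_div] at this
    calc (x - y) / x = 1 - y / x := by field_simp
      _ ≤ _ := this
  rw [abs_of_nonneg (sub_nonneg.mpr hyx)]
  calc (x - y) / N ≤ (x - y) / x := div_le_div_of_nonneg_left (sub_nonneg.mpr hyx) hx hxN
    _ ≤ _ := key.trans (le_abs_self _)

lemma hasSum_one_div_int_sq : HasSum (fun k : ℤ => 1 / (k : ℝ) ^ 2) (π ^ 2 / 3) := by
  have hpos : HasSum (fun n : ℕ => 1 / ((n : ℤ) : ℝ) ^ 2) (π ^ 2 / 6) := by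
    simpa using hasSum_zeta_two
  have hneg : HasSum (fun n : ℕ => 1 / ((-(n + 1) : ℤ) : ℝ) ^ 2) (π ^ 2 / 6) := by
    have h := (hasSum_nat_add_iff' 1).mpr hasSum_zeta_two
    rw [sum_range_one, Nat.cast_zero, zero_pow two_ne_zero, div_zero, sub_zero] at h
    exact h.congr_fun fun n => by push_cast; ring
  have h := HasSum.of_nat_of_neg_add_one (f := fun k : ℤ => 1 / (k : ℝ) ^ 2) hpos hneg
  rwa [← add_halves (π ^ 2 / 3), div_div, show (3 : ℝ) * 2 = 6 by norm_num]

-- The term `n = m` contributes `1 / 0 = 0`.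
lemma sum_filter_natCast_eq_one_div_sq_le (q : ℕ) (s : Finset ℕ) (m : ℕ) :
    ∑ n ∈ s.filter (fun n : ℕ => (m : ZMod q) = n), 1 / ((m : ℝ) - n) ^ 2 ≤
      π ^ 2 / 3 / (q : ℝ) ^ 2 := by
  set t := s.filter fun n : ℕ => (m : ZMod q) = n
  set e : ℕ → ℤ := fun n => ((n : ℤ) - m) / q
  have he : ∀ n ∈ t, (n : ℤ) - m = q * e n := fun n hn => by
    refine (Int.mul_ediv_cancel' ?_).symm
    rw [← ZMod.intCast_eq_intCast_iff_dvd_sub]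
    exact_mod_cast (Finset.mem_filter.mp hn).2
  have hinj : Set.InjOn e t := fun n₁ h₁ n₂ h₂ h => by
    have h₁' := he n₁ h₁; have h₂' := he n₂ h₂; rw [h, ← h₂'] at h₁'; omega
  calc ∑ n ∈ t, 1 / ((m : ℝ) - n) ^ 2 = (q : ℝ)⁻¹ ^ 2 * ∑ n ∈ t, 1 / ((e n : ℤ) : ℝ) ^ 2 := by
        rw [Finset.mul_sum]
        refine Finset.sum_congr rfl fun n hn => ?_
        have : (n : ℝ) - m = q * e n := by exact_mod_cast he n hn
        rw [← neg_sub, neg_sq, this]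
        ring
    _ = (q : ℝ)⁻¹ ^ 2 * ∑ k ∈ t.image e, 1 / (k : ℝ) ^ 2 := by rw [Finset.sum_image hinj]
    _ ≤ (q : ℝ)⁻¹ ^ 2 * (π ^ 2 / 3) := by
        gcongr
        exact hasSum_one_div_int_sq.summable.sum_le_tsum _ (fun k _ => by positivity) |>.trans_eq
          hasSum_one_div_int_sq.tsum_eq
    _ = _ := by ring

lemma sum_sum_mul_mul_le_of_sum_le {ι : Type*} (s : Finset ι) (x : ι → ℝ) {w : ι → ι → ℝ}
    (hw : ∀ m ∈ s, ∀ n ∈ s, 0 ≤ w m n) (hsymm : ∀ m n, w m n = w n m) {B : ℝ}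
    (hB : ∀ m ∈ s, ∑ n ∈ s, w m n ≤ B) :
    ∑ m ∈ s, ∑ n ∈ s, x m * x n * w m n ≤ B * ∑ m ∈ s, x m ^ 2 := by
  have hswap : ∑ m ∈ s, ∑ n ∈ s, x n ^ 2 * w m n = ∑ m ∈ s, ∑ n ∈ s, x m ^ 2 * w m n := by
    rw [Finset.sum_comm]
    exact Finset.sum_congr rfl fun m _ => Finset.sum_congr rfl fun n _ => by rw [hsymm]
  calc ∑ m ∈ s, ∑ n ∈ s, x m * x n * w m n
      ≤ ∑ m ∈ s, ∑ n ∈ s, (x m ^ 2 * w m n + x n ^ 2 * w m n) / 2 :=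
        Finset.sum_le_sum fun m hm => Finset.sum_le_sum fun n hn => by
          nlinarith [mul_nonneg (sq_nonneg (x m - x n)) (hw m hm n hn)]
    _ = ∑ m ∈ s, x m ^ 2 * ∑ n ∈ s, w m n := by
        simp only [add_div, Finset.sum_add_distrib, ← Finset.sum_div, hswap, Finset.mul_sum]
        ring
    _ ≤ ∑ m ∈ s, x m ^ 2 * B :=
        Finset.sum_le_sum fun m hm => mul_le_mul_of_nonneg_left (hB m hm) (sq_nonneg _)
    _ = B * ∑ m ∈ s, x m ^ 2 := by
        rw [Finset.mul_sum]
        exact Finset.sum_congr rfl fun _ _ => mul_comm _ _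

lemma natCast_cpow_I_mul {n : ℕ} (hn : n ≠ 0) (u : ℝ) :
    (n : ℂ) ^ (I * u) = cexp (I * Real.log n * u) := by
  rw [cpow_def_of_ne_zero (Nat.cast_ne_zero.mpr hn), ← natCast_log]
  ring_nf

theorem DirichletCharacter.norm_sum_mul_star_le {q : ℕ} [NeZero q] (x y : ZMod q) :
    ‖∑ ψ : DirichletCharacter ℂ q, ψ x * star (ψ y)‖ ≤ if x = y then (q : ℝ) else 0 := by
  have hsum : ∑ ψ : DirichletCharacter ℂ q, ψ x * star (ψ y) =
      ∑ ψ : DirichletCharacter ℂ q, ψ (x * Ring.inverse y) := by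
    simp only [MulChar.star_apply', MulChar.inv_apply, map_mul]
  rw [hsum, DirichletCharacter.sum_characters_eq]
  split_ifs with hxy hxy'
  · rw [Complex.norm_natCast]; exact_mod_cast Nat.totient_le q
  · have hy : IsUnit y := isUnit_ringInverse.mp (.of_mul_eq_one_right _ hxy)
    exact absurd (by rw [← Ring.inverse_mul_cancel_right y x hy, hxy, one_mul]) hxy'
  all_goals simp

noncomputable def boxFourier (T ξ : ℝ) : ℂ := ∫ u in -T..T, cexp (I * ξ * u)

lemma norm_cexp_I_mul_ofReal_mul (ξ u : ℝ) : ‖cexp (I * ξ * u)‖ = 1 := by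
  rw [show I * ξ * u = ((ξ * u : ℝ) : ℂ) * I by push_cast; ring, norm_exp_ofReal_mul_I]

lemma norm_boxFourier_le {T : ℝ} (hT : 0 ≤ T) (ξ : ℝ) : ‖boxFourier T ξ‖ ≤ 2 * T := by
  have := intervalIntegral.norm_integral_le_of_norm_le_const (a := -T) (b := T) (C := 1)
    fun u _ => (norm_cexp_I_mul_ofReal_mul ξ u).le
  rwa [abs_of_nonneg (by linarith), one_mul, sub_neg_eq_add, ← two_mul] at this

lemma norm_boxFourier_le_two_div {ξ : ℝ} (hξ : ξ ≠ 0) (T : ℝ) :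
    ‖boxFourier T ξ‖ ≤ 2 / |ξ| := by
  have hc : I * ξ ≠ 0 := mul_ne_zero I_ne_zero (ofReal_ne_zero.mpr hξ)
  rw [boxFourier, integral_exp_mul_complex hc, norm_div, norm_mul, norm_I, one_mul, norm_real,
    Real.norm_eq_abs]
  gcongr
  refine (norm_sub_le _ _).trans_eq ?_
  rw [norm_cexp_I_mul_ofReal_mul, norm_cexp_I_mul_ofReal_mul, one_add_one_eq_two]

lemma integral_cexp_sub_add (ξ t L : ℝ) :
    ∫ u in t - L..t + L, cexp (I * ξ * u) = cexp (I * ξ * t) * boxFourier L ξ := by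
  rw [boxFourier, ← intervalIntegral.integral_const_mul, sub_eq_neg_add, add_comm t,
    ← intervalIntegral.integral_comp_add_right]
  congr 1 with u
  rw [← Complex.exp_add]
  push_cast
  ring_nf

section BoxSmooth

variable {E : Type*} [NormedAddCommGroup E] [NormedSpace ℝ E]

/-- The integral of `f` against the convolution of the indicators of `[-δ, δ]` and `[-L, L]`. -/
noncomputable def boxSmooth (δ L : ℝ) (f : ℝ → E) : E :=
  ∫ t in -δ..δ, ∫ u in t - L..t + L, f u

lemma continuous_integral_sub_add {f : ℝ → E} (hf : Continuous f) (L : ℝ) :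
    Continuous fun t => ∫ u in t - L..t + L, f u := by
  have h : ∀ t, ∫ u in t - L..t + L, f u = ∫ u in -L..L, f (u + t) := fun t => by
    rw [intervalIntegral.integral_comp_add_right, neg_add_eq_sub, add_comm L]
  simp_rw [h]
  exact intervalIntegral.continuous_parametric_intervalIntegral_of_continuous' (by fun_prop) _ _

lemma boxSmooth_finset_sum {ι : Type*} (s : Finset ι) {f : ι → ℝ → E}
    (hf : ∀ i ∈ s, Continuous (f i)) (δ L : ℝ) :
    boxSmooth δ L (fun u => ∑ i ∈ s, f i u) = ∑ i ∈ s, boxSmooth δ L (f i) := by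
  unfold boxSmooth
  simp_rw [intervalIntegral.integral_finsetSum
    fun i hi => (hf i hi).intervalIntegrable _ _]
  exact intervalIntegral.integral_finsetSum
    fun i hi => (continuous_integral_sub_add (hf i hi) L).intervalIntegrable _ _

end BoxSmooth

lemma boxSmooth_const_mul (c : ℂ) (f : ℝ → ℂ) (δ L : ℝ) :
    boxSmooth δ L (fun u => c * f u) = c * boxSmooth δ L f := by
  simp only [boxSmooth, intervalIntegral.integral_const_mul]

lemma boxSmooth_ofReal (f : ℝ → ℝ) (δ L : ℝ) :
    boxSmooth δ L (fun u => (f u : ℂ)) = boxSmooth δ L f := by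
  simp only [boxSmooth, intervalIntegral.integral_ofReal]

lemma boxSmooth_cexp (δ L ξ : ℝ) :
    boxSmooth δ L (fun u => cexp (I * ξ * u)) = boxFourier δ ξ * boxFourier L ξ := by
  simp only [boxSmooth, integral_cexp_sub_add, intervalIntegral.integral_mul_const]
  rfl

lemma mul_integral_le_boxSmooth {S : ℝ → ℝ} (hS : Continuous S) (hS0 : 0 ≤ S) {δ U : ℝ}
    (hδ : 0 ≤ δ) (hU : 0 ≤ U) :
    2 * δ * ∫ u in -U..U, S u ≤ boxSmooth δ (U + δ) S := by
  have hle : ∀ t ∈ Set.Icc (-δ) δ, ∫ u in -U..U, S u ≤ ∫ u in t - (U + δ)..t + (U + δ), S u :=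
    fun t ht => intervalIntegral.integral_mono_interval (by linarith [ht.2]) (by linarith)
      (by linarith [ht.1]) (.of_forall hS0) (hS.intervalIntegrable _ _)
  have := intervalIntegral.integral_mono_on (μ := volume) (by linarith) intervalIntegrable_const
    ((continuous_integral_sub_add hS _).intervalIntegrable _ _) hle
  rwa [intervalIntegral.integral_const, smul_eq_mul, sub_neg_eq_add, ← two_mul] at this

section TrigPoly

variable {ι J : Type*} [Fintype J] (s : Finset ι) (c : J → ι → ℂ) (ν : ι → ℝ)

lemma ofReal_sum_norm_sq_trig (u : ℝ) :
    ((∑ j, ‖∑ n ∈ s, c j n * cexp (I * ν n * u)‖ ^ 2 : ℝ) : ℂ) =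
      ∑ m ∈ s, ∑ n ∈ s, (∑ j, c j m * star (c j n)) * cexp (I * ↑(ν m - ν n) * u) := by
  have hstar : ∀ n, star (cexp (I * ν n * u)) = cexp (-(I * ν n * u)) := fun n => by
    rw [← starRingEnd_apply, ← Complex.exp_conj]; simp
  calc _ = ∑ j, ∑ m ∈ s, ∑ n ∈ s, c j m * star (c j n) * cexp (I * ↑(ν m - ν n) * u) := by
        rw [ofReal_sum]
        refine Finset.sum_congr rfl fun j _ => ?_
        rw [ofReal_pow, ← Complex.mul_conj', map_sum, Finset.sum_mul_sum]
        refine Finset.sum_congr rfl fun m _ => Finset.sum_congr rfl fun n _ => ?_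
        rw [map_mul, starRingEnd_apply, starRingEnd_apply, hstar, ofReal_sub, mul_sub, sub_mul,
          sub_eq_add_neg _ (_ * _), Complex.exp_add]
        ring
    _ = _ := by
        simp_rw [Finset.sum_mul]
        rw [Finset.sum_comm]
        exact Finset.sum_congr rfl fun m _ => Finset.sum_comm

lemma boxSmooth_sum_norm_sq_trig (δ L : ℝ) :
    boxSmooth δ L (fun u => ((∑ j, ‖∑ n ∈ s, c j n * cexp (I * ν n * u)‖ ^ 2 : ℝ) : ℂ)) =
      ∑ m ∈ s, ∑ n ∈ s, (∑ j, c j m * star (c j n)) *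
        (boxFourier δ (ν m - ν n) * boxFourier L (ν m - ν n)) := by
  simp_rw [ofReal_sum_norm_sq_trig]
  rw [boxSmooth_finset_sum _ (fun m _ => by fun_prop)]
  refine Finset.sum_congr rfl fun m _ => ?_
  rw [boxSmooth_finset_sum _ (fun n _ => by fun_prop)]
  refine Finset.sum_congr rfl fun n _ => ?_
  rw [boxSmooth_const_mul, boxSmooth_cexp]

theorem integral_sum_norm_sq_trig_le {δ U : ℝ} (hδ : 0 < δ) (hU : 0 ≤ U) :
    ∫ u in -U..U, ∑ j, ‖∑ n ∈ s, c j n * cexp (I * ν n * u)‖ ^ 2 ≤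
      (2 * δ)⁻¹ * ∑ m ∈ s, ∑ n ∈ s, ‖∑ j, c j m * star (c j n)‖ *
        ‖boxFourier δ (ν m - ν n) * boxFourier (U + δ) (ν m - ν n)‖ := by
  set S : ℝ → ℝ := fun u => ∑ j, ‖∑ n ∈ s, c j n * cexp (I * ν n * u)‖ ^ 2
  rw [le_inv_mul_iff₀ (by positivity)]
  calc 2 * δ * ∫ u in -U..U, S u
      ≤ boxSmooth δ (U + δ) S :=
        mul_integral_le_boxSmooth (by fun_prop) (fun u => by positivity) hδ.le hU
    _ ≤ ‖((boxSmooth δ (U + δ) S : ℝ) : ℂ)‖ := by rw [norm_real]; exact Real.le_norm_self _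
    _ ≤ _ := by
      rw [← boxSmooth_ofReal, boxSmooth_sum_norm_sq_trig]
      refine (norm_sum_le _ _).trans (Finset.sum_le_sum fun m _ => ?_)
      refine (norm_sum_le _ _).trans (Finset.sum_le_sum fun n _ => ?_)
      rw [norm_mul]

end TrigPoly

lemma norm_boxFourier_mul_boxFourier_log_sub_le {N m n : ℕ} (hm : m ∈ Icc 1 N)
    (hn : n ∈ Icc 1 N) {δ L : ℝ} (hδ : 0 ≤ δ) (hL : 0 ≤ L) :
    ‖boxFourier δ (Real.log m - Real.log n) * boxFourier L (Real.log m - Real.log n)‖ ≤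
      (if m = n then 4 * δ * L else 0) + 4 * N ^ 2 / ((m : ℝ) - n) ^ 2 := by
  obtain ⟨hm1, hmN⟩ := Finset.mem_Icc.mp hm
  obtain ⟨hn1, hnN⟩ := Finset.mem_Icc.mp hn
  rw [norm_mul]
  rcases eq_or_ne m n with rfl | hmn
  · rw [if_pos rfl]
    calc _ ≤ 2 * δ * (2 * L) := mul_le_mul (norm_boxFourier_le hδ _) (norm_boxFourier_le hL _)
          (norm_nonneg _) (by positivity)
      _ = 4 * δ * L + 4 * N ^ 2 / ((m : ℝ) - m) ^ 2 := by simp; ring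
  · rw [if_neg hmn, zero_add]
    have hgap : |(m : ℝ) - n| / N ≤ |Real.log m - Real.log n| :=
      abs_sub_div_le_abs_log_sub_log (by positivity) (by positivity) (by exact_mod_cast hmN)
        (by exact_mod_cast hnN)
    have hgap_pos : 0 < |(m : ℝ) - n| / N :=
      div_pos (abs_pos.mpr (sub_ne_zero.mpr (by exact_mod_cast hmn)))
        (by exact_mod_cast hm1.trans hmN)
    have hξ : Real.log m - Real.log n ≠ 0 := abs_pos.mp (hgap_pos.trans_le hgap)
    calc _ ≤ 2 / |Real.log m - Real.log n| * (2 / |Real.log m - Real.log n|) :=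
          mul_le_mul (norm_boxFourier_le_two_div hξ _) (norm_boxFourier_le_two_div hξ _)
            (norm_nonneg _) (by positivity)
      _ ≤ 2 / (|(m : ℝ) - n| / N) * (2 / (|(m : ℝ) - n| / N)) := by gcongr
      _ = 4 * N ^ 2 / ((m : ℝ) - n) ^ 2 := by
          rw [div_div_eq_mul_div, ← mul_div_mul_comm, abs_mul_abs_self]
          ring

/-- A majorant for `‖∑ ψ, ψ m * conj (ψ n)‖ * ‖boxFourier δ ξ * boxFourier L ξ‖` at
`ξ = log m - log n`; the term `4 N² / (m - n) ^ 2` vanishes at `m = n` since `1 / 0 = 0`. -/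
noncomputable def hybridKernel (q N : ℕ) (δ L : ℝ) (m n : ℕ) : ℝ :=
  if (m : ZMod q) = n then q * ((if m = n then 4 * δ * L else 0) + 4 * N ^ 2 / ((m : ℝ) - n) ^ 2)
  else 0

lemma hybridKernel_comm (q N : ℕ) (δ L : ℝ) (m n : ℕ) :
    hybridKernel q N δ L m n = hybridKernel q N δ L n m := by
  simp only [hybridKernel, eq_comm (a := m), eq_comm (a := (m : ZMod q)), ← neg_sub (n : ℝ),
    neg_sq]

lemma hybridKernel_nonneg (q N : ℕ) {δ L : ℝ} (hδ : 0 ≤ δ) (hL : 0 ≤ L) (m n : ℕ) :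
    0 ≤ hybridKernel q N δ L m n := by
  unfold hybridKernel
  split_ifs <;> positivity

lemma sum_hybridKernel_le (q N : ℕ) {δ L : ℝ} (hδ : 0 ≤ δ) (hL : 0 ≤ L) (s : Finset ℕ) (m : ℕ) :
    ∑ n ∈ s, hybridKernel q N δ L m n ≤ q * (4 * δ * L + 4 * N ^ 2 * (π ^ 2 / 3 / q ^ 2)) := by
  set t := s.filter fun n : ℕ => (m : ZMod q) = n
  have hdiag : ∑ n ∈ t, (if m = n then 4 * δ * L else 0) ≤ 4 * δ * L := by
    rw [Finset.sum_ite_eq]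
    split_ifs
    exacts [le_rfl, by positivity]
  calc ∑ n ∈ s, hybridKernel q N δ L m n
      = q * (∑ n ∈ t, (if m = n then 4 * δ * L else 0) +
          4 * N ^ 2 * ∑ n ∈ t, 1 / ((m : ℝ) - n) ^ 2) := by
        simp only [hybridKernel, t, Finset.sum_filter, Finset.mul_sum, ← Finset.sum_add_distrib]
        refine Finset.sum_congr rfl fun n _ => ?_
        split_ifs <;> ring
    _ ≤ _ := by
        gcongr
        exact sum_filter_natCast_eq_one_div_sq_le q s m

lemma norm_sum_char_mul_norm_boxFourier_le_hybridKernel {q N m n : ℕ} [NeZero q] (a : ℕ → ℂ)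
    (hm : m ∈ Icc 1 N) (hn : n ∈ Icc 1 N) {δ L : ℝ} (hδ : 0 ≤ δ) (hL : 0 ≤ L) :
    ‖∑ ψ : DirichletCharacter ℂ q, a m * ψ m * star (a n * ψ n)‖ *
        ‖boxFourier δ (Real.log m - Real.log n) * boxFourier L (Real.log m - Real.log n)‖ ≤
      ‖a m‖ * ‖a n‖ * hybridKernel q N δ L m n := by
  have hfactor : ∑ ψ : DirichletCharacter ℂ q, a m * ψ m * star (a n * ψ n) =
      a m * star (a n) * ∑ ψ : DirichletCharacter ℂ q, ψ m * star (ψ n) := by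
    rw [Finset.mul_sum]
    exact Finset.sum_congr rfl fun ψ _ => by rw [star_mul']; ring
  have hchar := DirichletCharacter.norm_sum_mul_star_le (m : ZMod q) n
  have hfreq := norm_boxFourier_mul_boxFourier_log_sub_le hm hn hδ hL
  rw [hfactor, norm_mul, norm_mul, norm_star, hybridKernel, mul_assoc]
  by_cases h : (m : ZMod q) = n
  · rw [if_pos h] at hchar ⊢
    exact mul_le_mul_of_nonneg_left (mul_le_mul hchar hfreq (norm_nonneg _) (by positivity))
      (by positivity)
  · rw [if_neg h] at hchar ⊢
    rw [le_antisymm hchar (norm_nonneg _)]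
    simp

lemma inv_two_mul_mul_add_le {q U N δ : ℝ} (hq : 1 ≤ q) (hU : 1 ≤ U) (hN : 0 ≤ N)
    (hδ : δ = (N + 1) / q) :
    (2 * δ)⁻¹ * (q * (4 * δ * (U + δ) + 4 * N ^ 2 * (π ^ 2 / 3 / q ^ 2))) ≤ 10 * (q * U + N) := by
  subst hδ
  have hpi : π ^ 2 < 10 := by nlinarith [pi_lt_d2, pi_pos]
  have hN2 : N ^ 2 / (N + 1) ≤ N := by
    rw [div_le_iff₀ (by positivity)]; nlinarith
  have hqU : 1 ≤ q * U := by nlinarith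
  calc _ = 2 * (q * U) + 2 * (N + 1) + 2 * π ^ 2 / 3 * (N ^ 2 / (N + 1)) := by
        field_simp; ring
    _ ≤ 2 * (q * U) + 2 * (N + 1) + 2 * 10 / 3 * N := by gcongr
    _ ≤ 10 * (q * U + N) := by nlinarith

/-- **Hybrid large sieve (Gallagher; Lemma 8.1)**: there is an absolute constant `C` such
that for every positive modulus `q`, every `U ≥ 1`, every `N`, and all complex `(a_n)`,
`∫_{-U}^{U} ∑_{ψ mod q} |∑_{n ≤ N} a_n ψ(n) n^{iu}|² du ≤ C (qU + N) ∑_{n ≤ N} |a_n|²`. -/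
theorem hybrid_large_sieve :
    ∃ C : ℝ, 0 < C ∧
      ∀ (q : ℕ) [NeZero q], ∀ U : ℝ, 1 ≤ U → ∀ (N : ℕ) (a : ℕ → ℂ),
        (∫ u in (-U)..U, ∑ ψ : DirichletCharacter ℂ q,
            ‖∑ n ∈ Finset.Icc 1 N, a n * ψ (n : ZMod q) *
              (n : ℂ) ^ (Complex.I * u)‖ ^ 2)
          ≤ C * ((q : ℝ) * U + N) * ∑ n ∈ Finset.Icc 1 N, ‖a n‖ ^ 2 := by
  refine ⟨10, by norm_num, fun q _ U hU N a => ?_⟩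
  have hq : (1 : ℝ) ≤ q := Nat.one_le_cast.mpr (Nat.pos_of_neZero q)
  set δ : ℝ := (N + 1) / q with hδ_def
  have hδ : 0 < δ := by positivity
  have hL : 0 ≤ U + δ := by linarith
  calc _ = ∫ u in -U..U, ∑ ψ : DirichletCharacter ℂ q,
        ‖∑ n ∈ Icc 1 N, a n * ψ n * cexp (I * Real.log n * u)‖ ^ 2 := by
        refine intervalIntegral.integral_congr fun u _ => Finset.sum_congr rfl fun ψ _ => ?_
        congr 2
        exact Finset.sum_congr rfl fun n hn => by
          rw [natCast_cpow_I_mul (by have := (Finset.mem_Icc.mp hn).1; omega) u]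
    _ ≤ (2 * δ)⁻¹ * ∑ m ∈ Icc 1 N, ∑ n ∈ Icc 1 N,
          ‖a m‖ * ‖a n‖ * hybridKernel q N δ (U + δ) m n :=
        (integral_sum_norm_sq_trig_le (J := DirichletCharacter ℂ q) (Icc 1 N)
          (fun ψ n => a n * ψ n) (fun n : ℕ => Real.log n) hδ (by linarith)).trans
          (mul_le_mul_of_nonneg_left (Finset.sum_le_sum fun m hm => Finset.sum_le_sum fun n hn =>
            norm_sum_char_mul_norm_boxFourier_le_hybridKernel a hm hn hδ.le hL) (by positivity))
    _ ≤ (2 * δ)⁻¹ * ((q * (4 * δ * (U + δ) + 4 * N ^ 2 * (π ^ 2 / 3 / q ^ 2))) *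
          ∑ n ∈ Icc 1 N, ‖a n‖ ^ 2) := by
        gcongr
        exact sum_sum_mul_mul_le_of_sum_le _ _ (fun m _ n _ => hybridKernel_nonneg q N hδ.le hL m n)
          (hybridKernel_comm q N δ _) (fun m _ => sum_hybridKernel_le q N hδ.le hL _ m)
    _ ≤ 10 * (q * U + N) * ∑ n ∈ Icc 1 N, ‖a n‖ ^ 2 := by
        rw [← mul_assoc]
        exact mul_le_mul_of_nonneg_right (inv_two_mul_mul_add_le hq hU N.cast_nonneg hδ_def)
          (by positivity)
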